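/- arXiv:2211.15122 — 3 statements merged into one kernel-verified Lean document; each statement's English description precedes it below -/
import Mathlib

section
/- If a mechanism (p, q) is a finite convex combination of favored-agent mechanisms, then for every agent i and every fixed t_{-i}, the function t_i ↦ p_i(t_i, t_{-i}) − q_i(t_i, t_{-i}) is constant on 𝒯_i. -/
/-- The type space: every coordinate lies in `[tlo i, thi i]`. -/
def InT {ι : Type*} (tlo thi : ι → ℝ) (t : ι → ℝ) : Prop :=
  ∀ i, t i ∈ Set.Icc (tlo i) (thi i)

/-- The quantity `max_{i ≠ i*} (t_i - c_i)`. -/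
noncomputable def maxOther {ι : Type*} (c : ι → ℝ) (istar : ι) (t : ι → ℝ) : ℝ :=
  ⨆ j : {j : ι // j ≠ istar}, (t j.1 - c j.1)

/-- Rule (i) of a favored-agent mechanism at scenario `t`: the favored agent `i*` receives
the good with probability one and nobody is inspected. -/
def RuleI {ι : Type*} (istar : ι) (p q : (ι → ℝ) → ι → ℝ) (t : ι → ℝ) : Prop :=
  p t istar = 1 ∧ q t istar = 0 ∧ ∀ i, i ≠ istar → p t i = 0 ∧ q t i = 0

/-- Rule (ii) of a favored-agent mechanism at scenario `t`: the lexicographically smallest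
agent maximizing `t_i - c_i` receives the good and is inspected with probability one. -/
def RuleII {ι : Type*} [LinearOrder ι] (c : ι → ℝ) (p q : (ι → ℝ) → ι → ℝ)
    (t : ι → ℝ) : Prop :=
  ∃ i', (∀ i, t i - c i ≤ t i' - c i') ∧ (∀ i, t i - c i = t i' - c i' → i' ≤ i) ∧
    p t i' = 1 ∧ q t i' = 1 ∧ ∀ i, i ≠ i' → p t i = 0 ∧ q t i = 0

/-- A favored-agent mechanism with favored agent `i*` and threshold `ν`: rule (i) applies
whenever `max_{i ≠ i*}(t_i - c_i) < ν`, rule (ii) applies whenever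
`max_{i ≠ i*}(t_i - c_i) > ν`, and at ties one of the two rules is used throughout
(type (i) or type (ii) mechanisms). -/
def IsFA {ι : Type*} [Fintype ι] [LinearOrder ι] (tlo thi c : ι → ℝ) (istar : ι) (ν : ℝ)
    (p q : (ι → ℝ) → ι → ℝ) : Prop :=
  (∀ t, InT tlo thi t → maxOther c istar t < ν → RuleI istar p q t) ∧
  (∀ t, InT tlo thi t → ν < maxOther c istar t → RuleII c p q t) ∧
  ((∀ t, InT tlo thi t → maxOther c istar t = ν → RuleI istar p q t) ∨
    (∀ t, InT tlo thi t → maxOther c istar t = ν → RuleII c p q t))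

/-- The principal's payoff in scenario `t`. -/
def Pay {ι : Type*} [Fintype ι] (c : ι → ℝ) (p q : (ι → ℝ) → ι → ℝ) (t : ι → ℝ) : ℝ :=
  ∑ i, (p t i * t i - q t i * c i)


lemma ruleI_diff {ι : Type*} (istar : ι) (p q : (ι → ℝ) → ι → ℝ) (t : ι → ℝ)
    (h : RuleI istar p q t) (i : ι) [Decidable (i = istar)] :
    p t i - q t i = if i = istar then 1 else 0 := by
  obtain ⟨h1, h2, h3⟩ := h
  by_cases hi : i = istar
  · subst hi; simp [h1, h2]
  · obtain ⟨a, b⟩ := h3 i hi; simp [hi, a, b]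

lemma ruleII_diff {ι : Type*} [LinearOrder ι] (c : ι → ℝ) (p q : (ι → ℝ) → ι → ℝ)
    (t : ι → ℝ) (h : RuleII c p q t) (i : ι) : p t i - q t i = 0 := by
  obtain ⟨i', _, _, hp, hq, ho⟩ := h
  by_cases hi : i = i'
  · subst hi; rw [hp, hq]; ring
  · obtain ⟨a, b⟩ := ho i hi; rw [a, b]; ring

lemma fa_key {ι : Type*} [Fintype ι] [LinearOrder ι] {tlo thi c : ι → ℝ} {istar : ι}
    {ν : ℝ} {p q : (ι → ℝ) → ι → ℝ} (h : IsFA tlo thi c istar ν p q)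
    {t t' : ι → ℝ} (ht : InT tlo thi t) (ht' : InT tlo thi t')
    (hm : maxOther c istar t = maxOther c istar t') (i : ι) :
    p t i - q t i = p t' i - q t' i := by
  classical
  obtain ⟨hI, hII, htie⟩ := h
  rcases lt_trichotomy (maxOther c istar t) ν with hlt | heq | hgt
  · rw [ruleI_diff _ _ _ _ (hI t ht hlt), ruleI_diff _ _ _ _ (hI t' ht' (hm ▸ hlt))]
  · rcases htie with htie | htie
    · rw [ruleI_diff _ _ _ _ (htie t ht heq), ruleI_diff _ _ _ _ (htie t' ht' (hm ▸ heq))]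
    · rw [ruleII_diff _ _ _ _ (htie t ht heq), ruleII_diff _ _ _ _ (htie t' ht' (hm ▸ heq))]
  · rw [ruleII_diff _ _ _ _ (hII t ht hgt), ruleII_diff _ _ _ _ (hII t' ht' (hm ▸ hgt))]

lemma fa_diff_ne {ι : Type*} [Fintype ι] [LinearOrder ι] {tlo thi c : ι → ℝ} {istar : ι}
    {ν : ℝ} {p q : (ι → ℝ) → ι → ℝ} (h : IsFA tlo thi c istar ν p q)
    (t : ι → ℝ) (ht : InT tlo thi t) {i : ι} (hi : i ≠ istar) :
    p t i - q t i = 0 := by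
  classical
  obtain ⟨hI, hII, htie⟩ := h
  rcases lt_trichotomy (maxOther c istar t) ν with hlt | heq | hgt
  · rw [ruleI_diff _ _ _ _ (hI t ht hlt)]; simp [hi]
  · rcases htie with htie | htie
    · rw [ruleI_diff _ _ _ _ (htie t ht heq)]; simp [hi]
    · exact ruleII_diff _ _ _ _ (htie t ht heq) i
  · exact ruleII_diff _ _ _ _ (hII t ht hgt) i

/-- If a mechanism `(p, q)` is a finite convex combination of
favored-agent mechanisms, then for every agent `i` and every fixed `t_{-i}` the function
`t_i ↦ p_i(t_i, t_{-i}) - q_i(t_i, t_{-i})` is constant on `𝒯_i`. -/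
theorem stmt_5 {ι : Type*} [Fintype ι] [Nontrivial ι] [LinearOrder ι] [DecidableEq ι]
    (tlo thi c : ι → ℝ)
    (h0 : ∀ i, 0 ≤ tlo i) (hlt : ∀ i, tlo i < thi i) (hc : ∀ i, 0 < c i)
    (K : ℕ) (π : Fin K → ℝ) (hπ0 : ∀ k, 0 ≤ π k) (hπ1 : ∑ k, π k = 1)
    (pk qk : Fin K → (ι → ℝ) → ι → ℝ) (istars : Fin K → ι) (νs : Fin K → ℝ)
    (hfa : ∀ k, IsFA tlo thi c (istars k) (νs k) (pk k) (qk k))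
    (p q : (ι → ℝ) → ι → ℝ)
    (hp : ∀ t, InT tlo thi t → ∀ i, p t i = ∑ k, π k * pk k t i)
    (hq : ∀ t, InT tlo thi t → ∀ i, q t i = ∑ k, π k * qk k t i) :
    ∀ i, ∀ t, InT tlo thi t → ∀ s ∈ Set.Icc (tlo i) (thi i),
      p (Function.update t i s) i - q (Function.update t i s) i = p t i - q t i := by
  intro i t ht s hs
  have hts : InT tlo thi (Function.update t i s) := by
    intro j
    by_cases hj : j = i
    · subst hj; simpa using hs
    · simpa [Function.update_of_ne hj] using ht j
  rw [hp t ht i, hq t ht i, hp _ hts i, hq _ hts i,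
    ← Finset.sum_sub_distrib, ← Finset.sum_sub_distrib]
  refine Finset.sum_congr rfl fun k _ => ?_
  rw [← mul_sub, ← mul_sub]
  congr 1
  by_cases hi : i = istars k
  · refine fa_key (hfa k) hts ht ?_ i
    unfold maxOther
    congr 1
    ext j
    rw [Function.update_of_ne (hi ▸ j.2)]
  · rw [fa_diff_ne (hfa k) _ hts hi, fa_diff_ne (hfa k) t ht hi]
end

section
/- Suppose argmax_i μ̲_i = {i*}. A feasible incentive-compatible mechanism (p, q) is optimal in the distributionally robust problem over the Markov ambiguity set if and only if ∑_i (p_i(t)·t_i − q_i(t)·c_i) ≥ t_{i*} for every scenario t ∈ 𝒯. -/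
/-!
If the payoff dominates `t i*` pointwise, every admissible distribution has expected payoff at
least `E[t i*] ≥ μ̲_{i*}`, while the Dirac measure at `μ̲` achieves `μ̲_{i*}` exactly, because a
total allocation of at most one never pays more than the largest type. Conversely, if
`Pay t < t i*` at some `t ∈ 𝒯`, put a small mass `r` on `t` and the rest on the point `s` with
`r t + (1 - r) s = μ̲`. As `r → 0`, `s → μ̲`, which lies in the interior of `𝒯` and has `i*` as
its strict argmax, so for small `r` the point `s` is a type profile with `Pay s ≤ s i*`; the
expected payoff is then below `r t i* + (1 - r) s i* = μ̲_{i*}`.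
-/

open MeasureTheory

/-- Membership in the Markov ambiguity set: a probability distribution supported on the
type space whose marginal means lie in `[mlo i, mhi i]`. -/
def InP {ι : Type*} [Fintype ι] (tlo thi mlo mhi : ι → ℝ) (P : Measure (ι → ℝ)) : Prop :=
  IsProbabilityMeasure P ∧ (∀ᵐ t ∂P, InT tlo thi t) ∧
    ∀ i, ∫ t, t i ∂P ∈ Set.Icc (mlo i) (mhi i)

/-- Feasibility: values in `[0,1]`, `q ≤ p`, and total allocation at most one, on the type space. -/
def Feas {ι : Type*} [Fintype ι] (tlo thi : ι → ℝ) (p q : (ι → ℝ) → ι → ℝ) : Prop :=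
  ∀ t, InT tlo thi t →
    (∀ i, 0 ≤ q t i ∧ q t i ≤ p t i ∧ p t i ≤ 1) ∧ ∑ i, p t i ≤ 1

/-- Incentive compatibility: no agent gains by misreporting his type. -/
def IC {ι : Type*} [DecidableEq ι] (tlo thi : ι → ℝ) (p q : (ι → ℝ) → ι → ℝ) : Prop :=
  ∀ i, ∀ t, InT tlo thi t → ∀ s ∈ Set.Icc (tlo i) (thi i),
    p (Function.update t i s) i - q (Function.update t i s) i ≤ p t i

open Filter Topology

section TwoPoint

variable {α : Type*} [MeasurableSpace α]

noncomputable def twoPoint (r : ℝ) (a b : α) : Measure α :=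
  ENNReal.ofReal r • Measure.dirac a + ENNReal.ofReal (1 - r) • Measure.dirac b

lemma isProbabilityMeasure_twoPoint {r : ℝ} (hr0 : 0 ≤ r) (hr1 : r ≤ 1) (a b : α) :
    IsProbabilityMeasure (twoPoint r a b) := by
  constructor
  simp [twoPoint, ← ENNReal.ofReal_add hr0 (sub_nonneg.2 hr1)]

variable [MeasurableSingletonClass α]

lemma ae_twoPoint {S : α → Prop} {a b : α} (ha : S a) (hb : S b) (r : ℝ) :
    ∀ᵐ x ∂twoPoint r a b, S x := by
  simp only [twoPoint, ae_add_measure_iff]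
  refine ⟨Measure.ae_smul_measure ?_ _, Measure.ae_smul_measure ?_ _⟩ <;>
    simpa only [ae_dirac_eq, eventually_pure]

lemma integral_twoPoint {r : ℝ} (hr0 : 0 ≤ r) (hr1 : r ≤ 1) (a b : α) (f : α → ℝ) :
    ∫ x, f x ∂twoPoint r a b = r * f a + (1 - r) * f b := by
  rw [twoPoint, integral_add_measure ((integrable_dirac (by simp)).smul_measure (by simp))
      ((integrable_dirac (by simp)).smul_measure (by simp)),
    integral_smul_measure, integral_smul_measure, integral_dirac, integral_dirac,
    ENNReal.toReal_ofReal hr0, ENNReal.toReal_ofReal (sub_nonneg.2 hr1), smul_eq_mul, smul_eq_mul]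

end TwoPoint

section BalancingPoint

variable {ι : Type*} {tlo thi : ι → ℝ}

noncomputable def balancingPoint (m t : ι → ℝ) (r : ℝ) : ι → ℝ :=
  fun i => (m i - r * t i) / (1 - r)

lemma mix_balancingPoint (m t : ι → ℝ) {r : ℝ} (hr : r ≠ 1) (i : ι) :
    r * t i + (1 - r) * balancingPoint m t r i = m i := by
  rw [balancingPoint, mul_div_cancel₀ _ (sub_ne_zero.2 hr.symm)]
  ring

lemma tendsto_balancingPoint (m t : ι → ℝ) : Tendsto (balancingPoint m t) (𝓝 0) (𝓝 m) := by
  refine tendsto_pi_nhds.2 fun i => ?_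
  have : ContinuousAt (fun r : ℝ => (m i - r * t i) / (1 - r)) 0 := by
    fun_prop (disch := norm_num)
  simpa only [balancingPoint, zero_mul, sub_zero, div_one] using this.tendsto

lemma eventually_balancingPoint [Finite ι] {m : ι → ℝ} (t : ι → ℝ) {k : ι}
    (hlo : ∀ i, tlo i < m i) (hhi : ∀ i, m i < thi i) (hmax : ∀ i, i ≠ k → m i < m k) :
    ∀ᶠ r in 𝓝 0, InT tlo thi (balancingPoint m t r) ∧
      ∀ i, balancingPoint m t r i ≤ balancingPoint m t r k := by
  have hs := tendsto_pi_nhds.1 (tendsto_balancingPoint m t)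
  refine (eventually_all.2 fun i => ?_).and (eventually_all.2 fun i => ?_)
  · exact ((hs i).eventually (lt_mem_nhds (hlo i))).and ((hs i).eventually (gt_mem_nhds (hhi i)))
      |>.mono fun r h => ⟨h.1.le, h.2.le⟩
  · rcases eq_or_ne i k with rfl | hik
    · exact .of_forall fun r => le_rfl
    · exact ((hs i).eventually_lt (hs k) (hmax i hik)).mono fun r h => h.le

end BalancingPoint

section Mechanism

variable {ι : Type*} [Fintype ι] {tlo thi mlo mhi c : ι → ℝ} {p q : (ι → ℝ) → ι → ℝ}

def expectedPaySet (tlo thi mlo mhi c : ι → ℝ) (p q : (ι → ℝ) → ι → ℝ) : Set ℝ :=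
  {x | ∃ P : Measure (ι → ℝ), InP tlo thi mlo mhi P ∧ x = ∫ t, Pay c p q t ∂P}

lemma measurable_pay (c : ι → ℝ) (hpm : ∀ i, Measurable fun t => p t i)
    (hqm : ∀ i, Measurable fun t => q t i) : Measurable (Pay c p q) :=
  Finset.measurable_sum _ fun i _ =>
    ((hpm i).mul (measurable_pi_apply i)).sub ((hqm i).mul_const (c i))

lemma Feas.pay_le (hfeas : Feas tlo thi p q) (hc : ∀ i, 0 ≤ c i) {t : ι → ℝ}
    (ht : InT tlo thi t) {b : ℝ} (hb0 : 0 ≤ b) (hb : ∀ i, t i ≤ b) : Pay c p q t ≤ b := by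
  obtain ⟨hbox, hsum⟩ := hfeas t ht
  calc Pay c p q t ≤ ∑ i, p t i * b := Finset.sum_le_sum fun i _ => by
        obtain ⟨hq0, hqp, -⟩ := hbox i
        exact (sub_le_self _ (mul_nonneg hq0 (hc i))).trans
          (mul_le_mul_of_nonneg_left (hb i) (hq0.trans hqp))
    _ = (∑ i, p t i) * b := (Finset.sum_mul ..).symm
    _ ≤ b := mul_le_of_le_one_left hb0 hsum

lemma Feas.abs_pay_le (hfeas : Feas tlo thi p q) (h0 : ∀ i, 0 ≤ tlo i) (hc : ∀ i, 0 ≤ c i)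
    {t : ι → ℝ} (ht : InT tlo thi t) : |Pay c p q t| ≤ ∑ i, (thi i + c i) :=
  (Finset.abs_sum_le_sum_abs _ _).trans <| Finset.sum_le_sum fun i _ => by
    obtain ⟨hq0, hqp, hp1⟩ := (hfeas t ht).1 i
    obtain ⟨hlo, hhi⟩ := ht i
    have := h0 i
    have := hc i
    exact abs_le.2 ⟨by nlinarith, by nlinarith⟩

lemma bddBelow_expectedPaySet (hfeas : Feas tlo thi p q) (h0 : ∀ i, 0 ≤ tlo i)
    (hc : ∀ i, 0 ≤ c i) : BddBelow (expectedPaySet tlo thi mlo mhi c p q) := by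
  refine ⟨-∑ i, (thi i + c i), ?_⟩
  rintro _ ⟨P, hP, rfl⟩
  have := hP.1
  refine neg_le_of_abs_le ?_
  simpa using norm_integral_le_of_norm_le_const (f := Pay c p q)
    (hP.2.1.mono fun t ht => hfeas.abs_pay_le h0 hc ht)

lemma InP.le_integral_pay {P : Measure (ι → ℝ)} (hP : InP tlo thi mlo mhi P)
    (hfeas : Feas tlo thi p q) (h0 : ∀ i, 0 ≤ tlo i) (hc : ∀ i, 0 ≤ c i)
    (hpm : ∀ i, Measurable fun t => p t i) (hqm : ∀ i, Measurable fun t => q t i) {k : ι}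
    (hdom : ∀ t, InT tlo thi t → t k ≤ Pay c p q t) : mlo k ≤ ∫ t, Pay c p q t ∂P := by
  have := hP.1
  have hk : Integrable (fun t => t k) P :=
    .of_bound (measurable_pi_apply k).aestronglyMeasurable (thi k) <| hP.2.1.mono fun t ht =>
      abs_le.2 ⟨by linarith [h0 k, (ht k).1, (ht k).2], (ht k).2⟩
  have hpay : Integrable (Pay c p q) P :=
    .of_bound (measurable_pay c hpm hqm).aestronglyMeasurable _ <|
      hP.2.1.mono fun t ht => hfeas.abs_pay_le h0 hc ht
  exact (hP.2.2 k).1.trans (integral_mono_ae hk hpay (hP.2.1.mono hdom))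

lemma inP_dirac {m : ι → ℝ} (hT : InT tlo thi m) (hM : ∀ i, m i ∈ Set.Icc (mlo i) (mhi i)) :
    InP tlo thi mlo mhi (Measure.dirac m) :=
  ⟨inferInstance, by simpa only [ae_dirac_eq, eventually_pure],
    fun i => by simpa only [integral_dirac] using hM i⟩

lemma inP_twoPoint {r : ℝ} (hr0 : 0 ≤ r) (hr1 : r ≤ 1) {a b : ι → ℝ} (ha : InT tlo thi a)
    (hb : InT tlo thi b) (hM : ∀ i, r * a i + (1 - r) * b i ∈ Set.Icc (mlo i) (mhi i)) :
    InP tlo thi mlo mhi (twoPoint r a b) :=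
  ⟨isProbabilityMeasure_twoPoint hr0 hr1 a b, ae_twoPoint ha hb r,
    fun i => by simpa only [integral_twoPoint hr0 hr1] using hM i⟩

lemma exists_inP_integral_pay_lt (hfeas : Feas tlo thi p q) (h0 : ∀ i, 0 ≤ tlo i)
    (hc : ∀ i, 0 ≤ c i) (h1 : ∀ i, tlo i < mlo i) (h2 : ∀ i, mlo i ≤ mhi i)
    (h3 : ∀ i, mhi i < thi i) {k : ι} (hk : ∀ i, i ≠ k → mlo i < mlo k) {t : ι → ℝ}
    (ht : InT tlo thi t) (hlt : Pay c p q t < t k) :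
    ∃ P, InP tlo thi mlo mhi P ∧ ∫ t, Pay c p q t ∂P < mlo k := by
  obtain ⟨r, ⟨hsT, hsk⟩, hr0, hr1⟩ :=
    (((eventually_balancingPoint t h1 (fun i => (h2 i).trans_lt (h3 i)) hk).filter_mono
      nhdsWithin_le_nhds).and (Ioo_mem_nhdsGT one_pos)).exists
  set s := balancingPoint mlo t r
  have hmix := mix_balancingPoint mlo t hr1.ne
  have hs : Pay c p q s ≤ s k := hfeas.pay_le hc hsT ((h0 k).trans (hsT k).1) hsk
  refine ⟨twoPoint r t s, inP_twoPoint hr0.le hr1.le ht hsT fun i => ?_, ?_⟩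
  · rw [hmix]
    exact ⟨le_rfl, h2 i⟩
  · rw [integral_twoPoint hr0.le hr1.le, ← hmix k]
    exact add_lt_add_of_lt_of_le (mul_lt_mul_of_pos_left hlt hr0)
      (mul_le_mul_of_nonneg_left hs (sub_nonneg.2 hr1.le))

end Mechanism

theorem stmt_13_general {ι : Type*} [Fintype ι]
    (tlo thi mlo mhi c : ι → ℝ)
    (h0 : ∀ i, 0 ≤ tlo i) (h1 : ∀ i, tlo i < mlo i) (h2 : ∀ i, mlo i ≤ mhi i)
    (h3 : ∀ i, mhi i < thi i) (hc : ∀ i, 0 < c i)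
    (istar : ι) (hstar : ∀ i, i ≠ istar → mlo i < mlo istar)
    (p q : (ι → ℝ) → ι → ℝ)
    (hpm : ∀ i, Measurable fun t => p t i) (hqm : ∀ i, Measurable fun t => q t i)
    (hfeas : Feas tlo thi p q) :
    sInf {x : ℝ | ∃ P : Measure (ι → ℝ), InP tlo thi mlo mhi P ∧
        x = ∫ t, Pay c p q t ∂P} = mlo istar ↔
      ∀ t, InT tlo thi t → t istar ≤ Pay c p q t := by
  change sInf (expectedPaySet tlo thi mlo mhi c p q) = _ ↔ _
  have hc' : ∀ i, 0 ≤ c i := fun i => (hc i).le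
  have hmT : InT tlo thi mlo := fun i => ⟨(h1 i).le, (h2 i).trans (h3 i).le⟩
  constructor
  · intro hopt t ht
    by_contra! hlt
    obtain ⟨P, hP, hPlt⟩ := exists_inP_integral_pay_lt hfeas h0 hc' h1 h2 h3 hstar ht hlt
    have := csInf_le (bddBelow_expectedPaySet hfeas h0 hc') ⟨P, hP, rfl⟩
    linarith
  · intro hdom
    refine IsLeast.csInf_eq ⟨⟨Measure.dirac mlo, inP_dirac hmT fun i => ⟨le_rfl, h2 i⟩, ?_⟩, ?_⟩
    · have hmax : ∀ i, mlo i ≤ mlo istar := fun i =>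
        (eq_or_ne i istar).elim (fun h => h ▸ le_rfl) fun h => (hstar i h).le
      rw [integral_dirac]
      exact le_antisymm (hdom _ hmT) (hfeas.pay_le hc' hmT ((h0 istar).trans (hmT istar).1) hmax)
    · rintro _ ⟨P, hP, rfl⟩
      exact hP.le_integral_pay hfeas h0 hc' hpm hqm hdom

/-- Suppose `argmax_i μ̲_i = {i*}`. A feasible incentive-compatible
mechanism is optimal in the distributionally robust problem over the Markov ambiguity set
(i.e., its worst-case expected payoff equals the optimal value `μ̲_{i*}`) if and only if
its payoff is at least `t_{i*}` in every scenario `t ∈ 𝒯`. -/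
theorem stmt_13 {ι : Type*} [Fintype ι] [Nonempty ι] [DecidableEq ι]
    (tlo thi mlo mhi c : ι → ℝ)
    (h0 : ∀ i, 0 ≤ tlo i) (h1 : ∀ i, tlo i < mlo i) (h2 : ∀ i, mlo i ≤ mhi i)
    (h3 : ∀ i, mhi i < thi i) (hc : ∀ i, 0 < c i)
    (istar : ι) (hstar : ∀ i, i ≠ istar → mlo i < mlo istar)
    (p q : (ι → ℝ) → ι → ℝ)
    (hpm : ∀ i, Measurable fun t => p t i) (hqm : ∀ i, Measurable fun t => q t i)
    (hfeas : Feas tlo thi p q) (hic : IC tlo thi p q) :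
    sInf {x : ℝ | ∃ P : Measure (ι → ℝ), InP tlo thi mlo mhi P ∧
        x = ∫ t, Pay c p q t ∂P} = mlo istar ↔
      ∀ t, InT tlo thi t → t istar ≤ Pay c p q t :=
  stmt_13_general tlo thi mlo mhi c h0 h1 h2 h3 hc istar hstar p q hpm hqm hfeas
end

section
/- Under the Markov ambiguity set with independent types, any favored-agent mechanism with favored agent i* ∈ argmax_i μ̲_i and threshold ν* ≥ max_i μ̲_i has worst-case expected payoff at least max_i μ̲_i and is therefore optimal: conditional on max_{i ≠ i*}(t̃_i − c_i) < ν*, independence gives E[t̃_{i*} | ·] = E[t̃_{i*}] ≥ μ̲_{i*}, and conditional on max_{i ≠ i*}(t̃_i − c_i) ≥ ν*, the payoff max_i(t̃_i − c_i) ≥ ν* ≥ max_i μ̲_i. -/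
open MeasureTheory

/-- The coordinates `t̃_1, …, t̃_I` are mutually independent under `P`. -/
def IndepCoords {ι : Type*} [Fintype ι] (P : MeasureTheory.Measure (ι → ℝ)) : Prop :=
  ProbabilityTheory.iIndepFun (fun i (t : ι → ℝ) => t i) P

/-! On the event `S` where rule (i) applies the payoff is `t i*`; off it, rule (ii) pays
`max_i (t_i - c_i) ≥ max_{i ≠ i*} (t_i - c_i) ≥ ν ≥ μ̲_{i*}`. Since `S` is determined by the
types of the other agents, independence gives `E[t_{i*}; S] = P(S) E[t_{i*}] ≥ P(S) μ̲_{i*}`,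
so the expected payoff is at least `μ̲_{i*} = max_i μ̲_i`. The point mass at `μ̲` attains the
bound: there every `t_j - c_j < μ̲_j ≤ ν`, so rule (i) applies and the payoff is `μ̲_{i*}`. -/

open ProbabilityTheory

lemma inT_iff_mem_Icc {ι : Type*} {tlo thi t : ι → ℝ} : InT tlo thi t ↔ t ∈ Set.Icc tlo thi := by
  simp only [InT, Set.mem_Icc, Pi.le_def, forall_and]

lemma inP_dirac_s17 {ι : Type*} [Fintype ι] {tlo thi mlo mhi a : ι → ℝ} (ha : InT tlo thi a)
    (hm : InT mlo mhi a) : InP tlo thi mlo mhi (Measure.dirac a) := by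
  refine ⟨inferInstance, (ae_dirac_iff ?_).2 ha, fun i => ?_⟩
  · simp only [InT, Set.ofPred_forall]
    exact MeasurableSet.iInter fun i => measurableSet_Icc.preimage (measurable_pi_apply i)
  · rw [integral_dirac]
    exact hm i

lemma indepCoords_dirac {ι : Type*} [Fintype ι] (a : ι → ℝ) : IndepCoords (Measure.dirac a) := by
  classical
  rw [IndepCoords, iIndepFun_iff_measure_inter_preimage_eq_mul]
  intro S sets _
  simp only [Measure.dirac_apply, Set.indicator_apply, Set.mem_preimage, Set.mem_iInter,
    Pi.one_apply, Finset.prod_boole]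
  simp

lemma integrable_of_continuous_of_ae_mem_compact {X : Type*} [TopologicalSpace X]
    [T2Space X] [MeasurableSpace X] [OpensMeasurableSpace X] {μ : Measure X} [IsFiniteMeasure μ]
    {K : Set X} (hK : IsCompact K) (hμK : ∀ᵐ x ∂μ, x ∈ K) {f : X → ℝ} (hf : Continuous f) :
    Integrable f μ := by
  rw [← Measure.restrict_eq_self_of_ae_mem hμK]
  exact hf.continuousOn.integrableOn_compact hK

lemma setIntegral_preimage_eq_measureReal_mul {Ω β : Type*} [MeasurableSpace Ω]
    [MeasurableSpace β] {μ : Measure Ω} {X : Ω → ℝ} {Y : Ω → β} (hXY : IndepFun X Y μ)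
    (hX : Measurable X) (hY : Measurable Y) {A : Set β} (hA : MeasurableSet A) :
    ∫ ω in Y ⁻¹' A, X ω ∂μ = μ.real (Y ⁻¹' A) * ∫ ω, X ω ∂μ := by
  have hind : Measurable (A.indicator (1 : β → ℝ)) := measurable_one.indicator hA
  have hprod : (Y ⁻¹' A).indicator X = fun ω => A.indicator 1 (Y ω) * X ω := by
    ext ω
    by_cases hω : Y ω ∈ A <;> simp [hω]
  rw [← integral_indicator (hY hA), hprod, ← integral_indicator_one (hY hA)]
  exact (hXY.symm.comp hind measurable_id).integral_fun_mul_eq_mul_integral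
    (hind.comp hY).aestronglyMeasurable hX.aestronglyMeasurable

section Payoff

variable {ι : Type*} [Fintype ι] {c : ι → ℝ} {p q : (ι → ℝ) → ι → ℝ} {t : ι → ℝ}

lemma pay_eq_of_single (k : ι) {x : ℝ} (hp : p t k = 1) (hq : q t k = x)
    (hrest : ∀ i, i ≠ k → p t i = 0 ∧ q t i = 0) : Pay c p q t = t k - x * c k := by
  rw [Pay, Finset.sum_eq_single k (fun i _ hi => by simp [hrest i hi]) (by simp), hp, hq,
    one_mul]

lemma pay_of_ruleI {istar : ι} (h : RuleI istar p q t) : Pay c p q t = t istar := by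
  obtain ⟨hp, hq, hrest⟩ := h
  simp [pay_eq_of_single istar hp hq hrest]

lemma pay_of_ruleII [Nonempty ι] [LinearOrder ι] (h : RuleII c p q t) :
    Pay c p q t = Finset.univ.sup' Finset.univ_nonempty fun i => t i - c i := by
  obtain ⟨k, hmax, -, hp, hq, hrest⟩ := h
  rw [pay_eq_of_single k hp hq hrest, one_mul]
  exact le_antisymm (Finset.le_sup' (fun i => t i - c i) (Finset.mem_univ k))
    (Finset.sup'_le _ _ fun i _ => hmax i)

end Payoff

section MaxOther

variable {ι : Type*} [Fintype ι] (c : ι → ℝ) (istar : ι)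

lemma measurable_maxOther : Measurable (maxOther c istar) :=
  Measurable.iSup fun j => (measurable_pi_apply j.1).sub measurable_const

lemma IndepCoords.indepFun_maxOther [DecidableEq ι] {P : Measure (ι → ℝ)}
    (hind : IndepCoords P) : IndepFun (fun t => t istar) (maxOther c istar) P := by
  have hsplit := hind.indepFun_finset {istar} {istar}ᶜ disjoint_compl_right measurable_pi_apply
  have hother : Measurable fun x : ({istar}ᶜ : Finset ι) → ℝ =>
      ⨆ j : {j : ι // j ≠ istar}, (x ⟨j.1, by simpa using j.2⟩ - c j.1) :=
    Measurable.iSup fun j => (measurable_pi_apply _).sub measurable_const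
  exact hsplit.comp (measurable_pi_apply ⟨istar, Finset.mem_singleton_self istar⟩) hother

variable [Nontrivial ι]

lemma maxOther_le_sup' (t : ι → ℝ) :
    maxOther c istar t ≤ Finset.univ.sup' Finset.univ_nonempty fun i => t i - c i :=
  have : Nonempty {j : ι // j ≠ istar} := nonempty_subtype.2 (exists_ne istar)
  ciSup_le fun j => Finset.le_sup' (fun i => t i - c i) (Finset.mem_univ j.1)

lemma maxOther_lt_of_le {c : ι → ℝ} (hc : ∀ i, 0 < c i) {t : ι → ℝ} {ν : ℝ} (ht : ∀ i, t i ≤ ν) :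
    maxOther c istar t < ν := by
  have : Nonempty {j : ι // j ≠ istar} := nonempty_subtype.2 (exists_ne istar)
  obtain ⟨j, hj⟩ := exists_eq_ciSup_of_finite (f := fun j : {j : ι // j ≠ istar} => t j - c j)
  rw [maxOther, ← hj]
  linarith [hc j.1, ht j.1]

end MaxOther

section LowerBound

variable {ι : Type*} [Fintype ι] [Nontrivial ι] [LinearOrder ι] {tlo thi mlo mhi c : ι → ℝ}
  {istar : ι} {p q : (ι → ℝ) → ι → ℝ} {P : Measure (ι → ℝ)}

lemma le_integral_pay_of_rule_regions {A : Set ℝ} (hA : MeasurableSet A)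
    (hI : ∀ t, InT tlo thi t → maxOther c istar t ∈ A → RuleI istar p q t)
    (hII : ∀ t, InT tlo thi t → maxOther c istar t ∉ A → RuleII c p q t)
    (hAc : ∀ x ∉ A, mlo istar ≤ x) (hP : InP tlo thi mlo mhi P) (hind : IndepCoords P) :
    mlo istar ≤ ∫ t, Pay c p q t ∂P := by
  classical
  obtain ⟨hprob, hae, hmean⟩ := hP
  set S := maxOther c istar ⁻¹' A
  have hS : MeasurableSet S := measurable_maxOther c istar hA
  set F : (ι → ℝ) → ℝ := fun t => Finset.univ.sup' Finset.univ_nonempty fun i => t i - c i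
  have hbox : ∀ᵐ t ∂P, t ∈ Set.Icc tlo thi := hae.mono fun t ht => inT_iff_mem_Icc.1 ht
  have hX : Integrable (fun t : ι → ℝ => t istar) P :=
    integrable_of_continuous_of_ae_mem_compact isCompact_Icc hbox (continuous_apply istar)
  have hF : Integrable F P := integrable_of_continuous_of_ae_mem_compact isCompact_Icc hbox
    (Continuous.finset_sup'_apply _ fun i _ => (continuous_apply i).sub continuous_const)
  have hpay : Pay c p q =ᵐ[P] S.piecewise (fun t => t istar) F := by
    filter_upwards [hae] with t ht
    by_cases htS : t ∈ S
    · rw [Set.piecewise_eq_of_mem _ _ _ htS, pay_of_ruleI (hI t ht htS)]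
    · rw [Set.piecewise_eq_of_notMem _ _ _ htS, pay_of_ruleII (hII t ht htS)]
  have hFS : ∀ t ∈ Sᶜ, mlo istar ≤ F t := fun t ht => (hAc _ ht).trans (maxOther_le_sup' c istar t)
  calc mlo istar = mlo istar * P.real S + mlo istar * P.real Sᶜ := by
        rw [← mul_add, probReal_add_probReal_compl hS, mul_one]
    _ ≤ P.real S * ∫ t, t istar ∂P + ∫ t in Sᶜ, F t ∂P := by
        gcongr ?_ + ?_
        · rw [mul_comm]
          exact mul_le_mul_of_nonneg_left (hmean istar).1 measureReal_nonneg
        · exact setIntegral_ge_of_const_le_real hS.compl (measure_ne_top _ _) hFS hF.integrableOn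
    _ = ∫ t, S.piecewise (fun t => t istar) F t ∂P := by
        rw [integral_piecewise hS hX.integrableOn hF.integrableOn,
          setIntegral_preimage_eq_measureReal_mul (hind.indepFun_maxOther c istar)
            (measurable_pi_apply istar) (measurable_maxOther c istar) hA]
    _ = ∫ t, Pay c p q t ∂P := integral_congr_ae hpay.symm

lemma le_integral_pay_of_isFA {ν : ℝ} (hfa : IsFA tlo thi c istar ν p q) (hν : mlo istar ≤ ν)
    (hP : InP tlo thi mlo mhi P) (hind : IndepCoords P) : mlo istar ≤ ∫ t, Pay c p q t ∂P := by
  obtain ⟨hlt, hgt, htie | htie⟩ := hfa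
  · refine le_integral_pay_of_rule_regions measurableSet_Iic (fun t ht hle => ?_)
      (fun t ht hle => hgt t ht (not_le.1 hle)) (fun x hx => hν.trans (not_le.1 hx).le) hP hind
    rcases (Set.mem_Iic.1 hle).lt_or_eq with h | h
    exacts [hlt t ht h, htie t ht h]
  · refine le_integral_pay_of_rule_regions measurableSet_Iio hlt
      (fun t ht hge => ?_) (fun x hx => hν.trans (not_lt.1 hx)) hP hind
    rcases (not_lt.1 (Set.mem_Iio.not.1 hge)).lt_or_eq with h | h
    exacts [hgt t ht h, htie t ht h.symm]

end LowerBound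

theorem stmt_17_general {ι : Type*} [Fintype ι] [Nontrivial ι] [LinearOrder ι]
    (tlo thi mlo mhi c : ι → ℝ)
    (h1 : ∀ i, tlo i < mlo i) (h2 : ∀ i, mlo i ≤ mhi i)
    (h3 : ∀ i, mhi i < thi i) (hc : ∀ i, 0 < c i)
    (istar : ι) (hstar : ∀ i, mlo i ≤ mlo istar)
    (ν : ℝ) (hν : Finset.univ.sup' Finset.univ_nonempty mlo ≤ ν)
    (p q : (ι → ℝ) → ι → ℝ) (hfa : IsFA tlo thi c istar ν p q) :
    (∀ P : Measure (ι → ℝ), InP tlo thi mlo mhi P → IndepCoords P →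
      Finset.univ.sup' Finset.univ_nonempty mlo ≤ ∫ t, Pay c p q t ∂P) ∧
    sInf {x : ℝ | ∃ P : Measure (ι → ℝ), InP tlo thi mlo mhi P ∧ IndepCoords P ∧
        x = ∫ t, Pay c p q t ∂P} =
      Finset.univ.sup' Finset.univ_nonempty mlo := by
  have hmax : Finset.univ.sup' Finset.univ_nonempty mlo = mlo istar :=
    le_antisymm (Finset.sup'_le _ _ fun i _ => hstar i) (Finset.le_sup' mlo (Finset.mem_univ istar))
  rw [hmax] at hν ⊢
  have hlower : ∀ P, InP tlo thi mlo mhi P → IndepCoords P → mlo istar ≤ ∫ t, Pay c p q t ∂P :=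
    fun P hP hind => le_integral_pay_of_isFA hfa hν hP hind
  have hmlo : InT tlo thi mlo := fun i => ⟨(h1 i).le, (h2 i).trans (h3 i).le⟩
  have hruleI : RuleI istar p q mlo :=
    hfa.1 mlo hmlo (maxOther_lt_of_le istar hc fun i => (hstar i).trans hν)
  refine ⟨hlower, IsLeast.csInf_eq ⟨⟨Measure.dirac mlo, inP_dirac_s17 hmlo fun i => ⟨le_rfl, h2 i⟩,
    indepCoords_dirac mlo, ?_⟩, fun x ⟨P, hP, hind, hx⟩ => hx ▸ hlower P hP hind⟩⟩
  rw [integral_dirac, pay_of_ruleI hruleI]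

/-- Under the Markov ambiguity set with independent types, any
favored-agent mechanism with favored agent `i* ∈ argmax_i μ̲_i` and threshold
`ν ≥ max_i μ̲_i` has expected payoff at least `max_i μ̲_i` under every admissible
distribution, hence worst-case expected payoff equal to the optimal value `max_i μ̲_i`,
and is therefore optimal. -/
theorem stmt_17 {ι : Type*} [Fintype ι] [Nontrivial ι] [LinearOrder ι]
    (tlo thi mlo mhi c : ι → ℝ)
    (h0 : ∀ i, 0 ≤ tlo i) (h1 : ∀ i, tlo i < mlo i) (h2 : ∀ i, mlo i ≤ mhi i)
    (h3 : ∀ i, mhi i < thi i) (hc : ∀ i, 0 < c i)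
    (istar : ι) (hstar : ∀ i, mlo i ≤ mlo istar)
    (ν : ℝ) (hν : Finset.univ.sup' Finset.univ_nonempty mlo ≤ ν)
    (p q : (ι → ℝ) → ι → ℝ) (hfa : IsFA tlo thi c istar ν p q) :
    (∀ P : Measure (ι → ℝ), InP tlo thi mlo mhi P → IndepCoords P →
      Finset.univ.sup' Finset.univ_nonempty mlo ≤ ∫ t, Pay c p q t ∂P) ∧
    sInf {x : ℝ | ∃ P : Measure (ι → ℝ), InP tlo thi mlo mhi P ∧ IndepCoords P ∧
        x = ∫ t, Pay c p q t ∂P} =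
      Finset.univ.sup' Finset.univ_nonempty mlo :=
  stmt_17_general tlo thi mlo mhi c h1 h2 h3 hc istar hstar ν hν p q hfa
end
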